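/- Let G_3 be the graph on vertices {v_1, v_2, a_1, a_2, a_3, b_1, b_2, b_3} with edges (v_1,a_i), (v_2,b_i), (a_i,b_i) for i ∈ {1,2,3}, and (a_i,a_{i+1}), (b_i,b_{i+1}), (a_{i+1},b_i) for i ∈ {1,2}. Then every graph homomorphism f : G_3 → H into a K_4-free graph H is injective. -/
import Mathlib


/-- The ladder-with-hubs graph `G n`: vertices `v₁ = Sum.inl false`, `v₂ = Sum.inl true`,
`a i = Sum.inr (false, i)` and `b i = Sum.inr (true, i)` (`0`-based indices, so `a_1` of
the paper is `a 0`, etc.), with edges `(v₁, a i)`, `(v₂, b i)`, `(a i, b i)` for all `i`,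
and `(a i, a (i+1))`, `(b i, b (i+1))`, `(a (i+1), b i)`. -/
def Gr (n : ℕ) : SimpleGraph (Bool ⊕ Bool × Fin n) :=
  SimpleGraph.fromRel (fun u v =>
    match u, v with
    | Sum.inl c, Sum.inr (d, _) => c = d
    | Sum.inr (false, i), Sum.inr (true, j) => (i : ℕ) = (j : ℕ) ∨ (i : ℕ) = (j : ℕ) + 1
    | Sum.inr (false, i), Sum.inr (false, j) => (i : ℕ) + 1 = (j : ℕ)
    | Sum.inr (true, i), Sum.inr (true, j) => (i : ℕ) + 1 = (j : ℕ)
    | _, _ => False)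

/-- The graph `D n`: the graph `G n` together with the wrap-around edges
`(a_1, a_n)`, `(b_1, b_n)` and `(a_1, b_n)` (in `0`-based indices: `(a 0, a (n-1))`,
`(b 0, b (n-1))`, `(a 0, b (n-1))`). -/
def Dr (n : ℕ) : SimpleGraph (Bool ⊕ Bool × Fin n) :=
  SimpleGraph.fromRel (fun u v =>
    match u, v with
    | Sum.inl c, Sum.inr (d, _) => c = d
    | Sum.inr (false, i), Sum.inr (true, j) =>
        (i : ℕ) = (j : ℕ) ∨ (i : ℕ) = (j : ℕ) + 1 ∨ ((i : ℕ) = 0 ∧ (j : ℕ) = n - 1)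
    | Sum.inr (false, i), Sum.inr (false, j) =>
        (i : ℕ) + 1 = (j : ℕ) ∨ ((i : ℕ) = 0 ∧ (j : ℕ) = n - 1)
    | Sum.inr (true, i), Sum.inr (true, j) =>
        (i : ℕ) + 1 = (j : ℕ) ∨ ((i : ℕ) = 0 ∧ (j : ℕ) = n - 1)
    | _, _ => False)

set_option linter.unreachableTactic false
set_option linter.unusedTactic false

lemma no_k4 {W : Type} {H : SimpleGraph W} (hK4 : H.CliqueFree 4) {a b c d : W}
    (hab : H.Adj a b) (hac : H.Adj a c) (had : H.Adj a d)
    (hbc : H.Adj b c) (hbd : H.Adj b d) (hcd : H.Adj c d) : False := by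
  classical
  apply hK4 {a, b, c, d}
  constructor
  · intro x hx y hy hxy
    simp only [Finset.coe_insert, Set.mem_insert_iff, Finset.coe_singleton,
      Set.mem_singleton_iff] at hx hy
    rcases hx with rfl|rfl|rfl|rfl <;> rcases hy with rfl|rfl|rfl|rfl <;>
      first | exact absurd rfl hxy | assumption | (exact (by assumption : H.Adj _ _).symm)
  · have h1 : a ≠ b := hab.ne
    have h2 : a ≠ c := hac.ne
    have h3 : a ≠ d := had.ne
    have h4 : b ≠ c := hbc.ne
    have h5 : b ≠ d := hbd.ne
    have h6 : c ≠ d := hcd.ne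
    simp [Finset.card_insert_of_notMem, *]

lemma key {W : Type} {H : SimpleGraph W} (hK4 : H.CliqueFree 4) (f : Gr 3 →g H)
    {u w : Bool ⊕ Bool × Fin 3} (t1 t2 t3 : Bool ⊕ Bool × Fin 3)
    (h12 : (Gr 3).Adj t1 t2) (h13 : (Gr 3).Adj t1 t3) (h23 : (Gr 3).Adj t2 t3)
    (h1 : (Gr 3).Adj u t1 ∨ (Gr 3).Adj w t1)
    (h2 : (Gr 3).Adj u t2 ∨ (Gr 3).Adj w t2)
    (h3 : (Gr 3).Adj u t3 ∨ (Gr 3).Adj w t3)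
    (hfu : f u = f w) : False := by
  have g1 : H.Adj (f u) (f t1) := by rcases h1 with h|h; exacts [f.map_adj h, hfu ▸ f.map_adj h]
  have g2 : H.Adj (f u) (f t2) := by rcases h2 with h|h; exacts [f.map_adj h, hfu ▸ f.map_adj h]
  have g3 : H.Adj (f u) (f t3) := by rcases h3 with h|h; exacts [f.map_adj h, hfu ▸ f.map_adj h]
  exact no_k4 hK4 g1 g2 g3 (f.map_adj h12) (f.map_adj h13) (f.map_adj h23)


/-- Every graph homomorphism from `G 3` into a `K₄`-free graph is
injective. -/
theorem G3_hom_injective {W : Type} (H : SimpleGraph W) (hK4 : H.CliqueFree 4)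
    (f : Gr 3 →g H) : Function.Injective f := by
  intro u w h
  by_contra hne
  have adj : ∀ {x y : Bool ⊕ Bool × Fin 3},
      x ≠ y ∧ _ → (Gr 3).Adj x y := fun hx => (SimpleGraph.fromRel_adj _ _ _).mpr hx
  exfalso
  rcases u with (cu|⟨cu,iu⟩) <;> rcases w with (cw|⟨cw,iw⟩) <;>
    first
      | (rcases cu with _|_ <;> rcases cw with _|_ <;> fin_cases iu <;> fin_cases iw <;> skip)
      | (rcases cu with _|_ <;> rcases cw with _|_ <;> fin_cases iu <;> skip)
      | (rcases cu with _|_ <;> rcases cw with _|_ <;> fin_cases iw <;> skip)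
      | (rcases cu with _|_ <;> rcases cw with _|_)
  all_goals first
    | exact hne rfl
    | exact absurd h (f.map_adj (adj (by decide))).ne
    | exact key hK4 f (Sum.inr (false,1)) (Sum.inr (true,0)) (Sum.inr (true,1))
        (adj (by decide)) (adj (by decide)) (adj (by decide))
        (by first | exact Or.inl (adj (by decide)) | exact Or.inr (adj (by decide)))
        (by first | exact Or.inl (adj (by decide)) | exact Or.inr (adj (by decide)))
        (by first | exact Or.inl (adj (by decide)) | exact Or.inr (adj (by decide))) h
    | exact key hK4 f (Sum.inr (false,1)) (Sum.inr (false,2)) (Sum.inr (true,1))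
        (adj (by decide)) (adj (by decide)) (adj (by decide))
        (by first | exact Or.inl (adj (by decide)) | exact Or.inr (adj (by decide)))
        (by first | exact Or.inl (adj (by decide)) | exact Or.inr (adj (by decide)))
        (by first | exact Or.inl (adj (by decide)) | exact Or.inr (adj (by decide))) h
    | exact key hK4 f (Sum.inr (false,0)) (Sum.inr (false,1)) (Sum.inr (true,0))
        (adj (by decide)) (adj (by decide)) (adj (by decide))
        (by first | exact Or.inl (adj (by decide)) | exact Or.inr (adj (by decide)))
        (by first | exact Or.inl (adj (by decide)) | exact Or.inr (adj (by decide)))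
        (by first | exact Or.inl (adj (by decide)) | exact Or.inr (adj (by decide))) h
    | exact key hK4 f (Sum.inr (true,1)) (Sum.inr (true,2)) (Sum.inr (false,2))
        (adj (by decide)) (adj (by decide)) (adj (by decide))
        (by first | exact Or.inl (adj (by decide)) | exact Or.inr (adj (by decide)))
        (by first | exact Or.inl (adj (by decide)) | exact Or.inr (adj (by decide)))
        (by first | exact Or.inl (adj (by decide)) | exact Or.inr (adj (by decide))) h
    | exact key hK4 f (Sum.inl false) (Sum.inr (false,1)) (Sum.inr (false,2))
        (adj (by decide)) (adj (by decide)) (adj (by decide))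
        (by first | exact Or.inl (adj (by decide)) | exact Or.inr (adj (by decide)))
        (by first | exact Or.inl (adj (by decide)) | exact Or.inr (adj (by decide)))
        (by first | exact Or.inl (adj (by decide)) | exact Or.inr (adj (by decide))) h
    | exact key hK4 f (Sum.inl true) (Sum.inr (true,0)) (Sum.inr (true,1))
        (adj (by decide)) (adj (by decide)) (adj (by decide))
        (by first | exact Or.inl (adj (by decide)) | exact Or.inr (adj (by decide)))
        (by first | exact Or.inl (adj (by decide)) | exact Or.inr (adj (by decide)))
        (by first | exact Or.inl (adj (by decide)) | exact Or.inr (adj (by decide))) h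
    | exact key hK4 f (Sum.inl false) (Sum.inr (false,0)) (Sum.inr (false,1))
        (adj (by decide)) (adj (by decide)) (adj (by decide))
        (by first | exact Or.inl (adj (by decide)) | exact Or.inr (adj (by decide)))
        (by first | exact Or.inl (adj (by decide)) | exact Or.inr (adj (by decide)))
        (by first | exact Or.inl (adj (by decide)) | exact Or.inr (adj (by decide))) h
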